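/- For real numbers l ≥ 1 and m > (1+4l)/2, the quantity g(m, l) = (2m+1)² / (16l·((2m+1)² − (4m+3)l)) is positive and satisfies g(m, l) ≤ 9/92. -/
import Mathlib

theorem stmt_5 (l m : ℝ) (hl : 1 ≤ l) (hm : m > (1 + 4 * l) / 2) :
    0 < (2 * m + 1) ^ 2 / (16 * l * ((2 * m + 1) ^ 2 - (4 * m + 3) * l)) ∧
    (2 * m + 1) ^ 2 / (16 * l * ((2 * m + 1) ^ 2 - (4 * m + 3) * l)) ≤ 9 / 92 := by
  have hl0 : 0 < l := by linarith
  have ha : 2 * m + 1 > 4 * l + 2 := by linarith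
  have hD : 0 < (2 * m + 1) ^ 2 - (4 * m + 3) * l := by nlinarith [sq_nonneg (2*m+1-4*l-2), sq_nonneg l]
  have hden : 0 < 16 * l * ((2 * m + 1) ^ 2 - (4 * m + 3) * l) := by positivity
  constructor
  · exact div_pos (by nlinarith) hden
  · rw [div_le_div_iff₀ hden (by norm_num)]
    nlinarith [sq_nonneg (2*m+1-4*l-2), mul_nonneg (le_of_lt hl0) (sq_nonneg (2*m+1-4*l-2)), mul_nonneg (sub_nonneg.2 hl) (sq_nonneg (2*m+1-4*l-2)), sq_nonneg (l-1), mul_pos hl0 hD]
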